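/- Let α be a finite nonempty type, H a subgroup of Perm α, and let W = W(H, Perm ℕ) ≤ Perm(α × ℕ) be the wreath product of H with the full symmetric group of ℕ. Let Ω be the (finite) set of H-orbits of nonempty subsets of α, and for each o ∈ Ω let deg(o) be the common cardinality of the subsets belonging to o. Then for every natural number n, the number of W-orbits of n-element finite subsets of α × ℕ equals the number of functions m : Ω → ℕ satisfying Σ_{o ∈ Ω} m(o) · deg(o) = n. -/

import Mathlib

/-- The orbit setoid of a permutation group on `n`-element finite subsets. -/
def permSetoid {E : Type*} (G : Subgroup (Equiv.Perm E)) (n : ℕ) :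
    Setoid {s : Set E // s.Finite ∧ s.ncard = n} where
  r s t := ∃ g ∈ G, g '' s.1 = t.1
  iseqv := by
    constructor
    · exact fun s => ⟨1, G.one_mem, by simp⟩
    · rintro s t ⟨g, hg, h⟩
      refine ⟨g⁻¹, G.inv_mem hg, ?_⟩
      rw [← h, ← Set.image_comp]
      ext x; simp
    · rintro s t u ⟨g, hg, h⟩ ⟨g', hg', h'⟩
      refine ⟨g' * g, G.mul_mem hg' hg, ?_⟩
      rw [← h', ← h, ← Set.image_comp]
      ext x; simp

/-- The profile of a permutation group. -/
noncomputable def profile {E : Type*} (G : Subgroup (Equiv.Perm E)) (n : ℕ) : ℕ :=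
  Nat.card (Quotient (permSetoid G n))

/-- The wreath product `H ≀ P` of `H ≤ Perm α` and `P ≤ Perm I`, realized as a
subgroup of `Perm (α × I)`. -/
def wreath {α I : Type*} (H : Subgroup (Equiv.Perm α)) (P : Subgroup (Equiv.Perm I)) :
    Subgroup (Equiv.Perm (α × I)) where
  carrier := {g | ∃ σ ∈ P, ∃ h : I → Equiv.Perm α, (∀ i, h i ∈ H) ∧
    ∀ (a : α) (i : I), g (a, i) = (h i a, σ i)}
  one_mem' := ⟨1, P.one_mem, fun _ => 1, fun _ => H.one_mem, fun _ _ => rfl⟩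
  mul_mem' := by
    rintro g g' ⟨σ, hσ, h, hh, hg⟩ ⟨σ', hσ', h', hh', hg'⟩
    refine ⟨σ * σ', P.mul_mem hσ hσ', fun i => h (σ' i) * h' i,
      fun i => H.mul_mem (hh _) (hh' _), fun a i => ?_⟩
    simp [Equiv.Perm.mul_apply, hg', hg]
  inv_mem' := by
    rintro g ⟨σ, hσ, h, hh, hg⟩
    refine ⟨σ⁻¹, P.inv_mem hσ, fun i => (h (σ⁻¹ i))⁻¹,
      fun i => H.inv_mem (hh _), fun a i => ?_⟩
    have key : g ((h (σ⁻¹ i))⁻¹ a, σ⁻¹ i) = (a, i) := by rw [hg]; simp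
    rw [← key, ← Equiv.Perm.mul_apply, inv_mul_cancel, Equiv.Perm.one_apply]

/-- The orbit setoid of `H ≤ Perm α` acting on the nonempty finite subsets of
`α`; for finite `α` its quotient is the positive-degree part of the age of `H`. -/
def ageSetoid {α : Type*} [DecidableEq α] (H : Subgroup (Equiv.Perm α)) :
    Setoid {s : Finset α // s.Nonempty} where
  r s t := ∃ h ∈ H, s.1.image h = t.1
  iseqv := by
    constructor
    · exact fun s => ⟨1, H.one_mem, by simp⟩
    · rintro s t ⟨h, hh, hst⟩
      refine ⟨h⁻¹, H.inv_mem hh, ?_⟩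
      rw [← hst, Finset.image_image]
      ext x; simp
    · rintro s t u ⟨h, hh, hst⟩ ⟨h', hh', htu⟩
      refine ⟨h' * h, H.mul_mem hh' hh, ?_⟩
      rw [← htu, ← hst, Finset.image_image]
      ext x; simp
    
/-- The degree of an orbit of finite subsets: the common cardinality of its
members. -/
def orbDeg {α : Type*} [DecidableEq α] (H : Subgroup (Equiv.Perm α)) :
    Quotient (ageSetoid H) → ℕ :=
  Quotient.lift (fun s => s.1.card) (by
    rintro s t ⟨h, hh, hst⟩
    simp only [← hst, Finset.card_image_of_injective _ h.injective])


/-!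
A finite set `s ⊆ α × I` is the family of its columns `column s i ⊆ α`, almost all empty. An
element of `H ≀ Sym(I)` permutes the columns and moves each one by an element of `H`, so the
number `columnCount H s o` of columns lying in the `H`-orbit `o` is an invariant. When `I` is
infinite it is a complete invariant: the nonempty columns of two sets with the same counts can be
matched orbit by orbit, and the infinitely many empty columns absorb the rest of the permutation.
An `n`-element set has `∑ o, columnCount H s o * deg o = n`, and every `m` is realized by placing
`m o` copies of a representative of `o` in distinct columns.
-/

open Finset

section Invariant

variable {E β : Type*}

def IsCompleteInvariant (G : Subgroup (Equiv.Perm E)) (f : Finset E → β) : Prop :=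
  ∀ s t, f s = f t ↔ ∃ g ∈ G, s.map g.toEmbedding = t

theorem profile_eq_card_image {G : Subgroup (Equiv.Perm E)} {f : Finset E → β}
    (hf : IsCompleteInvariant G f) (n : ℕ) :
    profile G n = Nat.card (f '' {s | s.card = n}) := by
  let F : {s : Set E // s.Finite ∧ s.ncard = n} → f '' {s | s.card = n} := fun s =>
    ⟨f s.2.1.toFinset, _, by simpa [Set.ncard_eq_toFinset_card _ s.2.1] using s.2.2, rfl⟩
  have hF : Function.Surjective F := by
    rintro ⟨_, u, rfl, rfl⟩
    exact ⟨⟨u, u.finite_toSet, Set.ncard_coe_finset u⟩, by simp [F]⟩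
  have hker : ∀ s t, permSetoid G n s t ↔ Setoid.ker F s t := fun s t => by
    rw [Setoid.ker_def, Subtype.ext_iff, hf]
    refine exists_congr fun g => and_congr_right fun _ => ?_
    rw [← Finset.coe_inj, Finset.coe_map, Set.Finite.coe_toFinset, Set.Finite.coe_toFinset]
    rfl
  exact Nat.card_congr ((Quotient.congrRight hker).trans (Setoid.quotientKerEquivOfSurjective F hF))

end Invariant

section Column

variable {α I : Type*}

noncomputable def column (s : Finset (α × I)) (i : I) : Finset α :=
  s.preimage (·, i) (Prod.mk_left_injective i).injOn

@[simp]
lemma mem_column {s : Finset (α × I)} {i : I} {a : α} : a ∈ column s i ↔ (a, i) ∈ s :=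
  mem_preimage

lemma column_injective : Function.Injective (column : Finset (α × I) → I → Finset α) := by
  intro s t h
  ext ⟨a, i⟩
  simpa using congr(a ∈ $(congrFun h i))

lemma map_column [DecidableEq I] (s : Finset (α × I)) (i : I) :
    (column s i).map ⟨(·, i), Prod.mk_left_injective i⟩ = {p ∈ s | p.2 = i} := by
  ext ⟨a, j⟩
  aesop

lemma card_eq_sum_card_column [DecidableEq I] (s : Finset (α × I)) :
    s.card = ∑ i ∈ s.image Prod.snd, (column s i).card := by
  rw [card_eq_sum_card_fiberwise fun p hp => mem_image_of_mem Prod.snd hp]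
  simp only [← map_column, card_map]

lemma column_map {g : Equiv.Perm (α × I)} {σ : Equiv.Perm I} {h : I → Equiv.Perm α}
    (hg : ∀ a i, g (a, i) = (h i a, σ i)) (s : Finset (α × I)) (i : I) :
    column (s.map g.toEmbedding) (σ i) = (column s i).map (h i).toEmbedding := by
  ext a
  have : g.symm (a, σ i) = ((h i).symm a, i) := g.symm_apply_eq.2 (by simp [hg])
  simp [mem_map_equiv, this]

def wreathMk (σ : Equiv.Perm I) (h : I → Equiv.Perm α) : Equiv.Perm (α × I) :=
  (Equiv.prodComm α I).trans ((Equiv.prodShear σ h).trans (Equiv.prodComm I α))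

lemma wreathMk_apply (σ : Equiv.Perm I) (h : I → Equiv.Perm α) (a : α) (i : I) :
    wreathMk σ h (a, i) = (h i a, σ i) :=
  rfl

lemma wreathMk_mem_wreath {H : Subgroup (Equiv.Perm α)} {P : Subgroup (Equiv.Perm I)}
    {σ : Equiv.Perm I} {h : I → Equiv.Perm α} (hσ : σ ∈ P) (hh : ∀ i, h i ∈ H) :
    wreathMk σ h ∈ wreath H P :=
  ⟨σ, hσ, h, hh, wreathMk_apply σ h⟩

end Column

section AgeClass

variable {α : Type*} [DecidableEq α] (H : Subgroup (Equiv.Perm α))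

/-- `none` records an empty column, which lies in no class of `ageSetoid H`. -/
def ageClass (t : Finset α) : Option (Quotient (ageSetoid H)) :=
  if h : t.Nonempty then some ⟦⟨t, h⟩⟧ else none

variable {H}

lemma ageClass_eq_none_iff {t : Finset α} : ageClass H t = none ↔ t = ∅ := by
  simp [ageClass, not_nonempty_iff_eq_empty]

lemma ageClass_eq_some_iff {t : Finset α} {o : Quotient (ageSetoid H)} :
    ageClass H t = some o ↔ ∃ ht : t.Nonempty, ⟦⟨t, ht⟩⟧ = o := by
  simp [ageClass]

lemma ageClass_out (o : Quotient (ageSetoid H)) : ageClass H o.out.1 = some o :=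
  ageClass_eq_some_iff.2 ⟨o.out.2, Quotient.out_eq o⟩

lemma orbDeg_of_ageClass_eq_some {t : Finset α} {o : Quotient (ageSetoid H)}
    (h : ageClass H t = some o) : orbDeg H o = t.card := by
  obtain ⟨ht, rfl⟩ := ageClass_eq_some_iff.1 h
  rfl

lemma ageClass_map {g : Equiv.Perm α} (hg : g ∈ H) (t : Finset α) :
    ageClass H (t.map g.toEmbedding) = ageClass H t := by
  rcases t.eq_empty_or_nonempty with rfl | ht
  · rfl
  · rw [ageClass, ageClass, dif_pos (ht.map), dif_pos ht, Option.some_inj]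
    exact Quotient.sound ⟨g⁻¹, H.inv_mem hg, by ext; simp [map_eq_image, image_image]⟩

lemma exists_map_eq_of_ageClass_eq {t u : Finset α} (h : ageClass H t = ageClass H u) :
    ∃ g ∈ H, t.map g.toEmbedding = u := by
  rcases t.eq_empty_or_nonempty with rfl | ht
  · exact ⟨1, H.one_mem, by simp [ageClass_eq_none_iff.1 h.symm]⟩
  · obtain ⟨hu, hcls⟩ := ageClass_eq_some_iff.1 (h.symm.trans (dif_pos ht))
    obtain ⟨g, hg, htu⟩ := Quotient.exact hcls.symm
    exact ⟨g, hg, (map_eq_image _ _).trans htu⟩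

end AgeClass

section ColumnCount

variable {α I : Type*} [DecidableEq α] (H : Subgroup (Equiv.Perm α))

noncomputable def columnCount (s : Finset (α × I)) (o : Quotient (ageSetoid H)) : ℕ :=
  Nat.card {i // ageClass H (column s i) = some o}

variable {H}

lemma ageClass_column_eq_none_iff [DecidableEq I] {s : Finset (α × I)} {i : I} :
    ageClass H (column s i) = none ↔ i ∉ s.image Prod.snd := by
  simp [ageClass_eq_none_iff, eq_empty_iff_forall_notMem]

open Classical in
lemma setOf_ageClass_column_eq_some [DecidableEq I] (s : Finset (α × I))
    (o : Quotient (ageSetoid H)) :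
    {i | ageClass H (column s i) = some o} =
      ↑{i ∈ s.image Prod.snd | ageClass H (column s i) = some o} := by
  ext i
  simp only [Set.mem_ofPred_eq, coe_filter, iff_and_self]
  intro h
  by_contra hi
  simp [ageClass_column_eq_none_iff.2 hi] at h

open Classical in
lemma columnCount_eq_card_filter [DecidableEq I] (s : Finset (α × I))
    (o : Quotient (ageSetoid H)) :
    columnCount H s o = #{i ∈ s.image Prod.snd | ageClass H (column s i) = some o} := by
  rw [columnCount, ← Set.ncard_coe_finset, ← setOf_ageClass_column_eq_some]
  rfl

lemma finite_setOf_ageClass_column_eq_some (s : Finset (α × I)) (o : Quotient (ageSetoid H)) :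
    {i | ageClass H (column s i) = some o}.Finite := by
  classical
  rw [setOf_ageClass_column_eq_some]
  exact finite_toSet _

lemma mk_setOf_ageClass_column_eq_none [Infinite I] (s : Finset (α × I)) :
    Cardinal.mk {i // ageClass H (column s i) = none} = Cardinal.mk I := by
  classical
  rw [← Cardinal.mk_compl_finset_of_infinite (s.image Prod.snd)]
  exact Cardinal.mk_congr (Equiv.subtypeEquivRight fun i => by
    simp [ageClass_column_eq_none_iff])

lemma columnCount_map {g : Equiv.Perm (α × I)} {σ : Equiv.Perm I} {h : I → Equiv.Perm α}
    (hg : ∀ a i, g (a, i) = (h i a, σ i)) (hh : ∀ i, h i ∈ H) (s : Finset (α × I)) :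
    columnCount H (s.map g.toEmbedding) = columnCount H s := by
  funext o
  refine Nat.card_congr (σ.subtypeEquiv fun i => ?_).symm
  rw [column_map hg, ageClass_map (hh i)]

lemma sum_columnCount_mul_orbDeg [Finite α] (s : Finset (α × I)) :
    ∑ᶠ o, columnCount H s o * orbDeg H o = s.card := by
  classical
  have := Fintype.ofFinite (Quotient (ageSetoid H))
  let cls i := ageClass H (column s i)
  calc ∑ᶠ o, columnCount H s o * orbDeg H o
      = ∑ o, ∑ i ∈ s.image Prod.snd with cls i = some o, (column s i).card := by
        rw [finsum_eq_sum_of_fintype]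
        refine sum_congr rfl fun o _ => ?_
        rw [columnCount_eq_card_filter, card_eq_sum_ones, sum_mul, one_mul]
        exact sum_congr rfl fun i hi => orbDeg_of_ageClass_eq_some (mem_filter.1 hi).2
    _ = ∑ c, ∑ i ∈ s.image Prod.snd with cls i = c, (column s i).card := by
        have hnone : ∑ i ∈ s.image Prod.snd with cls i = none, (column s i).card = 0 :=
          sum_eq_zero fun i hi => by rw [ageClass_eq_none_iff.1 (mem_filter.1 hi).2, card_empty]
        rw [Fintype.sum_option, hnone, zero_add]
    _ = s.card := by
        rw [sum_fiberwise_of_maps_to fun _ _ => mem_univ _, card_eq_sum_card_column]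

end ColumnCount

section WreathSym

variable {α I : Type*} [DecidableEq α] {H : Subgroup (Equiv.Perm α)}

lemma exists_wreathMk_map_eq_of_columnCount_eq [Infinite I] {s t : Finset (α × I)}
    (hst : columnCount H s = columnCount H t) :
    ∃ (σ : Equiv.Perm I) (k : I → Equiv.Perm α),
      (∀ i, k i ∈ H) ∧ s.map (wreathMk σ k).toEmbedding = t := by
  -- Cofinitely many columns of `s` and of `t` are empty, so also the fibres over `none` match.
  have hfib : ∀ c, Nonempty
      ({i // ageClass H (column s i) = c} ≃ {i // ageClass H (column t i) = c}) := by
    rintro (_ | o)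
    · exact Cardinal.eq.1 ((mk_setOf_ageClass_column_eq_none s).trans
        (mk_setOf_ageClass_column_eq_none t).symm)
    · have : Finite {i // ageClass H (column s i) = some o} :=
        (finite_setOf_ageClass_column_eq_some s o).to_subtype
      have : Finite {i // ageClass H (column t i) = some o} :=
        (finite_setOf_ageClass_column_eq_some t o).to_subtype
      exact Finite.card_eq.1 (congrFun hst o)
  let σ : Equiv.Perm I := Equiv.ofFiberEquiv fun c => (hfib c).some
  have hσ : ∀ i, ageClass H (column s i) = ageClass H (column t (σ i)) :=
    fun i => (Equiv.ofFiberEquiv_map (fun c => (hfib c).some) i).symm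
  choose k hkH hk using fun i => exists_map_eq_of_ageClass_eq (hσ i)
  refine ⟨σ, k, hkH, column_injective (funext (σ.surjective.forall.2 fun i => ?_))⟩
  rw [column_map (wreathMk_apply σ k), hk i]

theorem isCompleteInvariant_columnCount [Infinite I] :
    IsCompleteInvariant (wreath H (⊤ : Subgroup (Equiv.Perm I))) (columnCount H) := by
  intro s t
  constructor
  · intro hst
    obtain ⟨σ, k, hk, rfl⟩ := exists_wreathMk_map_eq_of_columnCount_eq hst
    exact ⟨_, wreathMk_mem_wreath (Subgroup.mem_top σ) hk, rfl⟩
  · rintro ⟨g, ⟨σ, -, h, hh, hg⟩, rfl⟩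
    exact (columnCount_map hg hh s).symm

lemma exists_columnCount_eq [Finite α] [Infinite I] (m : Quotient (ageSetoid H) → ℕ) :
    ∃ s : Finset (α × I), columnCount H s = m := by
  classical
  have := Fintype.ofFinite (Quotient (ageSetoid H))
  obtain ⟨e, he⟩ : ∃ e : (Σ o, Fin (m o)) → I, e.Injective := by
    obtain ⟨f, hf⟩ := Countable.exists_injective_nat (Σ o, Fin (m o))
    exact ⟨Infinite.natEmbedding I ∘ f, (Infinite.natEmbedding I).injective.comp hf⟩
  -- one column `o.out` at position `e ⟨o, k⟩` for each `k < m o`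
  let s : Finset (α × I) := univ.biUnion fun x => x.1.out.1 ×ˢ {e x}
  have hcol : ∀ x, column s (e x) = x.1.out.1 := fun x => by
    ext a
    simp [s, he.eq_iff]
  have hcol' : ∀ i ∉ Set.range e, column s i = ∅ := fun i hi => by
    ext a
    simpa [s] using fun o _ k h => hi ⟨⟨o, k⟩, h⟩
  refine ⟨s, funext fun o => ?_⟩
  have hfib : {i | ageClass H (column s i) = some o} = e '' {x | x.1 = o} := by
    ext i
    constructor
    · intro hi
      obtain ⟨x, rfl⟩ : i ∈ Set.range e := by
        by_contra h
        simp [hcol' i h, ageClass] at hi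
      rw [Set.mem_ofPred_eq, hcol, ageClass_out, Option.some_inj] at hi
      exact ⟨x, hi, rfl⟩
    · rintro ⟨x, rfl, rfl⟩
      exact (congrArg _ (hcol x)).trans (ageClass_out x.1)
  show Set.ncard {i | ageClass H (column s i) = some o} = m o
  rw [hfib, Set.ncard_image_of_injective _ he, ← Nat.card_coe_set_eq]
  exact (Nat.card_congr (Equiv.sigmaSubtype o)).trans (Nat.card_fin _)

lemma image_columnCount_setOf_card_eq [Finite α] [Infinite I] (n : ℕ) :
    columnCount H '' {s : Finset (α × I) | s.card = n} = {m | ∑ᶠ o, m o * orbDeg H o = n} := by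
  ext m
  constructor
  · rintro ⟨s, rfl, rfl⟩
    exact sum_columnCount_mul_orbDeg s
  · intro hm
    obtain ⟨s, rfl⟩ := exists_columnCount_eq (I := I) m
    exact ⟨s, (sum_columnCount_mul_orbDeg s).symm.trans hm, rfl⟩

end WreathSym

theorem profile_wreath_symInfty_general
    (α : Type*) [Finite α] [DecidableEq α]
    (H : Subgroup (Equiv.Perm α)) :
    ∀ n : ℕ,
      profile (wreath H (⊤ : Subgroup (Equiv.Perm ℕ))) n =
        Nat.card {m : Quotient (ageSetoid H) → ℕ //
          ∑ᶠ o : Quotient (ageSetoid H), m o * orbDeg H o = n} := by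
  intro n
  rw [profile_eq_card_image (isCompleteInvariant_columnCount (I := ℕ)),
    image_columnCount_setOf_card_eq (I := ℕ)]
  rfl

/-- For a finite permutation group `H ≤ Perm α` and the wreath product
`W = H ≀ Sym(ℕ)` acting on infinitely many copies of `α`, the number of
`W`-orbits of `n`-element subsets equals the number of multisets of elements
of the (positive part of the) age of `H` with total degree `n`, i.e. the
number of functions `m : Ω → ℕ` with `∑ m(o)·deg(o) = n`. -/
theorem profile_wreath_symInfty
    (α : Type*) [Finite α] [Nonempty α] [DecidableEq α]
    (H : Subgroup (Equiv.Perm α)) :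
    ∀ n : ℕ,
      profile (wreath H (⊤ : Subgroup (Equiv.Perm ℕ))) n =
        Nat.card {m : Quotient (ageSetoid H) → ℕ //
          ∑ᶠ o : Quotient (ageSetoid H), m o * orbDeg H o = n} :=
  profile_wreath_symInfty_general α H
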